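/- Let Dxx, Dyy, Dxy be real numbers with |Dxx|, |Dyy| ≤ 3Bmn and |Dxy| ≤ 4Bmn, perturbed by errors e₁, e₂ with |e₁|, |e₂| ≤ 3ΔBmn on Dxx, Dyy and e₃ with |e₃| ≤ 4ΔBmn on Dxy, where 0 ≤ Δ ≤ 1. Then the total determinant error |((Dxx+e₁)(Dyy+e₂) − 0.81(Dxy+e₃)²) − (Dxx·Dyy − 0.81·Dxy²)| is at most Δ·B·m·n·(3|Dxx| + 3|Dyy| + 0.81·8·|Dxy|) + 25·Δ²·B²·m²·n². -/
import Mathlib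


/-- Rigorous total error bound (including second-order terms) for the SURF
determinant `Dxx·Dyy − 0.81·Dxy²` under rational-approximation perturbations
of the Haar responses. -/
theorem surf_determinant_total_error
    (Dxx Dyy Dxy e₁ e₂ e₃ Δ B : ℝ) (m n : ℕ)
    (hΔ0 : 0 ≤ Δ) (hΔ1 : Δ ≤ 1) (hB : 0 ≤ B)
    (hDxx : |Dxx| ≤ 3 * B * m * n) (hDyy : |Dyy| ≤ 3 * B * m * n)
    (hDxy : |Dxy| ≤ 4 * B * m * n)
    (he₁ : |e₁| ≤ 3 * Δ * B * m * n) (he₂ : |e₂| ≤ 3 * Δ * B * m * n)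
    (he₃ : |e₃| ≤ 4 * Δ * B * m * n) :
    |((Dxx + e₁) * (Dyy + e₂) - 0.81 * (Dxy + e₃) ^ 2)
        - (Dxx * Dyy - 0.81 * Dxy ^ 2)|
      ≤ Δ * B * m * n * (3 * |Dxx| + 3 * |Dyy| + 0.81 * 8 * |Dxy|)
        + 25 * Δ ^ 2 * B ^ 2 * (m : ℝ) ^ 2 * (n : ℝ) ^ 2 := by
  have hkey : ((Dxx + e₁) * (Dyy + e₂) - 0.81 * (Dxy + e₃) ^ 2)
        - (Dxx * Dyy - 0.81 * Dxy ^ 2)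
      = (Dxx * e₂ + Dyy * e₁ + e₁ * e₂) - 0.81 * (2 * Dxy * e₃ + e₃ ^ 2) := by
    ring
  rw [hkey]
  have h1 : |Dxx * e₂| ≤ |Dxx| * (3 * Δ * B * m * n) := by
    rw [abs_mul]; exact mul_le_mul_of_nonneg_left he₂ (abs_nonneg _)
  have h2 : |Dyy * e₁| ≤ |Dyy| * (3 * Δ * B * m * n) := by
    rw [abs_mul]; exact mul_le_mul_of_nonneg_left he₁ (abs_nonneg _)
  have h3 : |e₁ * e₂| ≤ (3 * Δ * B * m * n) * (3 * Δ * B * m * n) := by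
    rw [abs_mul]
    exact mul_le_mul he₁ he₂ (abs_nonneg _)
      (by positivity)
  have h4 : |Dxy * e₃| ≤ |Dxy| * (4 * Δ * B * m * n) := by
    rw [abs_mul]; exact mul_le_mul_of_nonneg_left he₃ (abs_nonneg _)
  have h5 : |e₃ ^ 2| ≤ (4 * Δ * B * m * n) * (4 * Δ * B * m * n) := by
    rw [abs_pow, sq]
    exact mul_le_mul he₃ he₃ (abs_nonneg _) (by positivity)
  have htri : |(Dxx * e₂ + Dyy * e₁ + e₁ * e₂) - 0.81 * (2 * Dxy * e₃ + e₃ ^ 2)|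
      ≤ |Dxx * e₂| + |Dyy * e₁| + |e₁ * e₂|
        + 0.81 * (2 * |Dxy * e₃| + |e₃ ^ 2|) := by
    have := abs_sub (Dxx * e₂ + Dyy * e₁ + e₁ * e₂) (0.81 * (2 * Dxy * e₃ + e₃ ^ 2))
    calc |(Dxx * e₂ + Dyy * e₁ + e₁ * e₂) - 0.81 * (2 * Dxy * e₃ + e₃ ^ 2)|
        ≤ |Dxx * e₂ + Dyy * e₁ + e₁ * e₂| + |0.81 * (2 * Dxy * e₃ + e₃ ^ 2)| :=
          abs_sub _ _
      _ ≤ (|Dxx * e₂| + |Dyy * e₁| + |e₁ * e₂|)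
            + 0.81 * (2 * |Dxy * e₃| + |e₃ ^ 2|) := by
          gcongr
          · calc |Dxx * e₂ + Dyy * e₁ + e₁ * e₂|
                ≤ |Dxx * e₂ + Dyy * e₁| + |e₁ * e₂| := abs_add_le _ _
              _ ≤ |Dxx * e₂| + |Dyy * e₁| + |e₁ * e₂| := by
                  gcongr; exact abs_add_le _ _
          · rw [abs_mul]
            have : |(0.81 : ℝ)| = 0.81 := by rw [abs_of_nonneg]; norm_num
            rw [this]
            gcongr
            calc |2 * Dxy * e₃ + e₃ ^ 2| ≤ |2 * Dxy * e₃| + |e₃ ^ 2| := abs_add_le _ _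
              _ = 2 * |Dxy * e₃| + |e₃ ^ 2| := by
                  rw [mul_assoc, abs_mul]; norm_num
  have hmn : (0 : ℝ) ≤ Δ * B * m * n := by positivity
  nlinarith [htri, h1, h2, h3, h4, h5, sq_nonneg (Δ * B * m * n), abs_nonneg Dxy]
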